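/- arXiv:2602.10864 — 2 statements merged into one kernel-verified Lean document; each statement's English description precedes it below -/
import Mathlib

section
/- For every real constant λ > 0 there exists a constant c > 0 such that the following holds. Let N, B, M, w, t ∈ ℤ>0 with M > t and B ≥ 2. If the BLSD problem with parameters N and B has (M, w, t)-certificates, then t ≥ c·N·B^{1−λ}/w or t·log₂(M/t) ≥ c·N·log₂ B. -/
open scoped BigOperators

/-- Symbols of a grammar with `nv` variables and terminal alphabet `α`:
variables are `Sum.inl`, terminals are `Sum.inr`. -/
abbrev GSym (nv : ℕ) (α : Type) : Type := Sum (Fin nv) α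

open Classical in
/-- The number of runs (maximal blocks of equal consecutive entries) of a list,
i.e. the length `|rle(X)|` of its run-length encoding. -/
noncomputable def numRuns {β : Type} : List β → ℕ
  | [] => 0
  | [_] => 1
  | a :: b :: l => (if a = b then 0 else 1) + numRuns (b :: l)

/-- A weighted straight-line grammar (SLG) with variables `Fin nv` and terminal
alphabet `α`.  The same structure is used for run-length straight-line grammars
(RLSLGs), which differ from SLGs only in how their size is measured
(`sizeRLE` instead of `size`).  The field `rank` witnesses the existence of a
strict linear order `≺` on the variables with `B ≺ A` whenever `B` occurs in
`rhs A`. -/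
structure WSLG (nv : ℕ) (α : Type) where
  rhs : Fin nv → List (GSym nv α)
  start : GSym nv α
  wt : α → ℕ
  wt_pos : ∀ a, 1 ≤ wt a
  rank : Fin nv → ℕ
  rank_lt : ∀ A B, Sum.inl B ∈ rhs A → rank B < rank A

namespace WSLG

variable {nv nv' : ℕ} {α : Type}

/-- Fuel-based expansion; the fuel is always sufficient thanks to `rank_lt`. -/
def expandFuel (G : WSLG nv α) : ℕ → GSym nv α → List α
  | _, Sum.inr a => [a]
  | 0, Sum.inl _ => []
  | n + 1, Sum.inl A => ((G.rhs A).map (G.expandFuel n)).flatten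

/-- The expansion `exp(s)` of a symbol `s`. -/
def exp (G : WSLG nv α) : GSym nv α → List α
  | Sum.inr a => [a]
  | Sum.inl A => G.expandFuel (G.rank A + 1) (Sum.inl A)

/-- The expansion of a sequence of symbols. -/
def expSeq (G : WSLG nv α) (xs : List (GSym nv α)) : List α :=
  (xs.map G.exp).flatten

/-- The weight `⟨s⟩` of a symbol: total weight of the characters of its expansion. -/
def wtSym (G : WSLG nv α) (s : GSym nv α) : ℕ :=
  ((G.exp s).map G.wt).sum

/-- The weight of a sequence of symbols. -/
def wtSeq (G : WSLG nv α) (xs : List (GSym nv α)) : ℕ :=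
  ((G.expSeq xs).map G.wt).sum

/-- The size `|G|` of an SLG: total length of all right-hand sides. -/
def size (G : WSLG nv α) : ℕ := ∑ A, (G.rhs A).length

/-- The size `|G|` of an RLSLG: total run-length-encoded size of all
right-hand sides. -/
noncomputable def sizeRLE (G : WSLG nv α) : ℕ := ∑ A, numRuns (G.rhs A)

/-- A grammar is unweighted if every terminal has weight 1. -/
def Unweighted (G : WSLG nv α) : Prop := ∀ a, G.wt a = 1

/-- `f` is a grammar homomorphism from `G` to `H`:
`exp_G(A) = exp_H(f A)` for every variable `A` of `G`. -/
def IsHom (G : WSLG nv α) (H : WSLG nv' α) (f : Fin nv → Fin nv') : Prop :=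
  ∀ A, G.exp (Sum.inl A) = H.exp (Sum.inl (f A))

/-- Normal form for RLSLGs: every right-hand side is either a pair of exactly
two symbols or a power `s^k` of a single symbol with `k > 2`. -/
def NormalForm (G : WSLG nv α) : Prop :=
  ∀ A, (∃ s t : GSym nv α, G.rhs A = [s, t]) ∨
       (∃ (s : GSym nv α) (k : ℕ), 2 < k ∧ G.rhs A = List.replicate k s)

/-- A grammar is contracting if no variable has a heavy variable child, i.e.
every variable child `B` of `A` satisfies `⟨B⟩ ≤ ⟨A⟩/2`. -/
def Contracting (G : WSLG nv α) : Prop :=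
  ∀ A : Fin nv, ∀ B : Fin nv, Sum.inl B ∈ G.rhs A →
    2 * G.wtSym (Sum.inl B) ≤ G.wtSym (Sum.inl A)

/-- A variable `A` is `τ`-nice (w.r.t. the constant `d`):
(1) every variable child `B` satisfies `⟨B⟩ ≤ ⟨A⟩/τ`;
(2) `|rle(rhs A)| ≤ 2dτ`;
(3) every contiguous substring `X` of `rhs A` with `⟨X⟩ ≤ ⟨A⟩/τ` satisfies
`|rle(X)| ≤ 2d⌈log₂ τ⌉`. -/
def NiceVar (G : WSLG nv α) (d : ℕ) (τ : ℝ) (A : Fin nv) : Prop :=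
  (∀ B : Fin nv, Sum.inl B ∈ G.rhs A →
      (G.wtSym (Sum.inl B) : ℝ) ≤ (G.wtSym (Sum.inl A) : ℝ) / τ) ∧
  ((numRuns (G.rhs A) : ℝ) ≤ 2 * d * τ) ∧
  (∀ X : List (GSym nv α), X <:+: G.rhs A →
      (G.wtSeq X : ℝ) ≤ (G.wtSym (Sum.inl A) : ℝ) / τ →
      (numRuns X : ℝ) ≤ 2 * d * (⌈Real.logb 2 τ⌉ : ℝ))

/-- A grammar is `(τr, τv)`-nice (w.r.t. `d`) if its start symbol is `τr`-nice
and all its other variables are `τv`-nice. -/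
def Nice (G : WSLG nv α) (d : ℕ) (τr τv : ℝ) : Prop :=
  (∀ A : Fin nv, Sum.inl A = G.start → G.NiceVar d τr A) ∧
  (∀ A : Fin nv, Sum.inl A ≠ G.start → G.NiceVar d τv A)

/-- Parent–child step in the parse tree: from the node `(A, a)` to its `i`-th
child `(B_i, a + ⟨B_0 ⋯ B_{i-1}⟩)` where `rhs A = B_0 ⋯ B_{k-1}`. -/
def PTStep (G : WSLG nv α) (p q : GSym nv α × ℕ) : Prop :=
  ∃ (A : Fin nv) (i : ℕ) (h : i < (G.rhs A).length),
    p.1 = Sum.inl A ∧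
    q = ((G.rhs A).get ⟨i, h⟩, p.2 + G.wtSeq ((G.rhs A).take i))

/-- `PTNode G ℓ v` states that `v` is a node of the parse tree `P_G` whose
path from the root `(start, 0)` has `ℓ` edges. -/
inductive PTNode (G : WSLG nv α) : ℕ → GSym nv α × ℕ → Prop
  | root : PTNode G 0 (G.start, 0)
  | step {n : ℕ} {p q : GSym nv α × ℕ} :
      PTNode G n p → PTStep G p q → PTNode G (n + 1) q

/-- Fuel-based height; the fuel is always sufficient thanks to `rank_lt`. -/
def heightFuel (G : WSLG nv α) : ℕ → GSym nv α → ℕ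
  | _, Sum.inr _ => 0
  | 0, Sum.inl _ => 0
  | n + 1, Sum.inl A => 1 + ((G.rhs A).map (G.heightFuel n)).foldr max 0

/-- The height of a symbol: `h(a) = 0` for terminals and
`h(A) = 1 + max_i h(B_i)` for a variable with `rhs A = B_0 ⋯ B_{k-1}`. -/
def heightSym (G : WSLG nv α) : GSym nv α → ℕ
  | Sum.inr _ => 0
  | Sum.inl A => G.heightFuel (G.rank A + 1) (Sum.inl A)

/-- A leaf variable (for parameter `b`): its right-hand side consists of
terminals only and has length in `[b .. 2b)`. -/
def IsLeafVar (G : WSLG nv α) (b : ℕ) (A : Fin nv) : Prop :=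
  (∀ s ∈ G.rhs A, ∃ a : α, s = Sum.inr a) ∧
  b ≤ (G.rhs A).length ∧ (G.rhs A).length < 2 * b

/-- A top variable: its right-hand side contains only variables. -/
def IsTopVar (G : WSLG nv α) (A : Fin nv) : Prop :=
  ∀ s ∈ G.rhs A, ∃ B : Fin nv, s = Sum.inl B

/-- A grammar is `b`-leafy if every variable is a leaf variable or a top
variable. -/
def BLeafy (G : WSLG nv α) (b : ℕ) : Prop :=
  ∀ A, G.IsLeafVar b A ∨ G.IsTopVar A

open Classical in
/-- The size `|Top(G)|` of the top part of a (b-leafy) RLSLG: total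
run-length-encoded size of the right-hand sides of the top variables. -/
noncomputable def topSizeRLE (G : WSLG nv α) : ℕ :=
  ∑ A, if G.IsTopVar A then numRuns (G.rhs A) else 0

open Classical in
/-- The number of leaf variables of a (b-leafy) grammar. -/
noncomputable def numLeafVars (G : WSLG nv α) (b : ℕ) : ℕ :=
  (Finset.univ.filter fun A => G.IsLeafVar b A).card

/-- For an unweighted `b`-leafy grammar `G`, the variable `A` (a top variable)
is `τ`-nice as a variable of the top part `Top(G)`: in `Top(G)`, the variables
are the top variables of `G`, the terminals are the leaf variables of `G`, and
the weight of a symbol is the length of its `G`-expansion. -/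
def NiceTopVar (G : WSLG nv α) (d : ℕ) (τ : ℝ) (A : Fin nv) : Prop :=
  (∀ B : Fin nv, Sum.inl B ∈ G.rhs A → G.IsTopVar B →
      ((G.exp (Sum.inl B)).length : ℝ) ≤ ((G.exp (Sum.inl A)).length : ℝ) / τ) ∧
  ((numRuns (G.rhs A) : ℝ) ≤ 2 * d * τ) ∧
  (∀ X : List (GSym nv α), X <:+: G.rhs A →
      ((G.expSeq X).length : ℝ) ≤ ((G.exp (Sum.inl A)).length : ℝ) / τ →
      (numRuns X : ℝ) ≤ 2 * d * (⌈Real.logb 2 τ⌉ : ℝ))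

/-- The top part `Top(G)` of an unweighted `b`-leafy grammar `G` is
`(τr, τv)`-nice (w.r.t. `d`): the start symbol, if it is a top variable, is
`τr`-nice in `Top(G)`, and all other top variables are `τv`-nice in `Top(G)`. -/
def TopNice (G : WSLG nv α) (d : ℕ) (τr τv : ℝ) : Prop :=
  (∀ A : Fin nv, G.IsTopVar A → Sum.inl A = G.start → G.NiceTopVar d τr A) ∧
  (∀ A : Fin nv, G.IsTopVar A → Sum.inl A ≠ G.start → G.NiceTopVar d τv A)

end WSLG

/-- A data-structure problem `f : X × Y → Z` has `(M, w, t)`-certificates. -/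
def HasCertificates {X Y Z : Type*} (f : X → Y → Z) (M w t : ℕ) : Prop :=
  ∃ D : Y → Fin M → (Fin w → Bool),
    ∀ x y, ∃ C : Finset (Fin M), C.card = t ∧
      ∀ y', (∀ i ∈ C, D y i = D y' i) → f x y' = f x y

/-- An input of the SLG Random Access problem with parameters `(n, g, σ)`:
an unweighted SLG of size at most `g` producing a string `T ∈ [0..σ)^n`. -/
structure RAInput (n g σ : ℕ) where
  nv : ℕ
  G : WSLG nv (Fin σ)
  unweighted : G.Unweighted
  size_le : G.size ≤ g
  len_eq : (G.exp G.start).length = n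

/-- The SLG Random Access problem: given a position `i ∈ [0..n)` and an input
producing `T`, return `T[i]`. -/
def RAProblem (n g σ : ℕ) (x : Fin n) (y : RAInput n g σ) : Fin σ :=
  (y.G.exp y.G.start).get (Fin.cast y.len_eq.symm x)

/-- The Blocked Lopsided Set Disjointness (BLSD) problem with parameters
`N, B`: queries are `S : [N] → [B]`, inputs are `T : [N] → 2^[B]`, and the
answer is whether there exists `i` with `S i ∈ T i`. -/
def BLSDProblem (N B : ℕ) (S : Fin N → Fin B) (T : Fin N → Finset (Fin B)) : Prop :=
  ∃ i, S i ∈ T i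


section BLSDAux
open Finset


lemma fact_lb : ∀ n : ℕ, ((n:ℝ)/Real.exp 1)^n ≤ n.factorial := by
  intro n
  induction n with
  | zero => simp
  | succ n ih =>
    have he : (0:ℝ) < Real.exp 1 := Real.exp_pos 1
    have key : ((n:ℝ)+1)^n ≤ (n:ℝ)^n * Real.exp 1 := by
      rcases Nat.eq_zero_or_pos n with h | h
      · subst h; simpa using (Real.one_le_exp (by norm_num))
      · have hn : (0:ℝ) < n := by exact_mod_cast h
        have h1 : (n:ℝ)+1 = n * (1 + 1/n) := by field_simp
        have h2 : (1 + 1/(n:ℝ))^n ≤ Real.exp 1 := by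
          calc (1 + 1/(n:ℝ))^n ≤ (Real.exp (1/n))^n := by
                apply pow_le_pow_left₀ (by positivity)
                  (by linarith [Real.add_one_le_exp (1/(n:ℝ))])
            _ = Real.exp 1 := by
                rw [← Real.exp_nat_mul]; congr 1; field_simp
        calc ((n:ℝ)+1)^n = (n:ℝ)^n * (1+1/(n:ℝ))^n := by rw [h1, mul_pow]
          _ ≤ (n:ℝ)^n * Real.exp 1 := by
              apply mul_le_mul_of_nonneg_left h2 (by positivity)
    have main : ((n:ℝ)+1)/Real.exp 1 * (((n:ℝ)+1)/Real.exp 1)^n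
        ≤ ((n:ℝ)+1) * ((n:ℝ)/Real.exp 1)^n := by
      rw [div_pow, div_pow]
      rw [div_mul_div_comm]
      rw [div_le_iff₀ (by positivity)]
      calc ((n:ℝ)+1) * ((n:ℝ)+1)^n ≤ ((n:ℝ)+1) * ((n:ℝ)^n * Real.exp 1) :=
            mul_le_mul_of_nonneg_left key (by positivity)
        _ = (↑n + 1) * (↑n ^ n / Real.exp 1 ^ n) * (Real.exp 1 * Real.exp 1 ^ n) := by
            field_simp
    calc ((↑(n+1):ℝ)/Real.exp 1)^(n+1)
        = ((n:ℝ)+1)/Real.exp 1 * (((n:ℝ)+1)/Real.exp 1)^n := by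
          push_cast; rw [pow_succ]; ring
      _ ≤ ((n:ℝ)+1) * ((n:ℝ)/Real.exp 1)^n := main
      _ ≤ ((n:ℝ)+1) * n.factorial := by
          apply mul_le_mul_of_nonneg_left ih (by positivity)
      _ = ((n+1).factorial : ℝ) := by
          rw [Nat.factorial_succ]; push_cast; ring

lemma inj_bound {N B' M w : ℕ}
    (D : (Fin N → Finset (Fin (B'+1))) → Fin M → Fin w → Bool)
    (hD : ∀ (S : Fin N → Fin (B'+1)) T T', D T = D T' →
      (BLSDProblem N (B'+1) S T ↔ BLSDProblem N (B'+1) S T')) :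
    B' * N ≤ w * M := by
  classical
  set emb : (Fin N → Finset (Fin B')) → (Fin N → Finset (Fin (B'+1))) :=
    fun U i => (U i).map ⟨Fin.castSucc, Fin.castSucc_injective _⟩ with hemb
  have hmem : ∀ (U : Fin N → Finset (Fin B')) (i : Fin N) (b : Fin B'),
      BLSDProblem N (B'+1) (fun j => if j = i then b.castSucc else Fin.last B') (emb U)
        ↔ b ∈ U i := by
    intro U i b
    constructor
    · rintro ⟨j, hj⟩
      by_cases h : j = i
      · subst h
        simp only [if_pos rfl] at hj
        simp only [hemb, Finset.mem_map] at hj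
        obtain ⟨a, ha, h2⟩ := hj
        simp only [Function.Embedding.coeFn_mk] at h2
        rwa [← Fin.castSucc_injective _ h2]
      · exfalso
        simp only [if_neg h, hemb] at hj
        obtain ⟨a, _, ha⟩ := Finset.mem_map.mp hj
        exact absurd ha (ne_of_lt (Fin.castSucc_lt_last a))
    · intro hb
      exact ⟨i, by simp [hemb, Finset.mem_map', hb]⟩
  have hinj : Function.Injective (fun U => D (emb U)) := by
    intro U1 U2 h
    funext i
    ext b
    rw [← hmem U1 i b, ← hmem U2 i b]
    exact hD _ _ _ h
  have hcard := Fintype.card_le_of_injective _ hinj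
  simp only [Fintype.card_fun, Fintype.card_finset, Fintype.card_fin,
    Fintype.card_bool] at hcard
  rw [← pow_mul, ← pow_mul] at hcard
  exact (Nat.pow_le_pow_iff_right (by norm_num)).mp hcard

section Master
variable {N B' M w t : ℕ}

set_option maxHeartbeats 2000000 in
lemma master (hN : 0 < N) (hB' : 1 ≤ B')
    (D : (Fin N → Finset (Fin (B'+1))) → Fin M → Fin w → Bool)
    (cert : (Fin N → Fin (B'+1)) → (Fin N → Finset (Fin (B'+1))) → Finset (Fin M))
    (hcard : ∀ S T, (cert S T).card = t)
    (hcert : ∀ S T T', (∀ i ∈ cert S T, D T i = D T' i) →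
      (BLSDProblem N (B'+1) S T' ↔ BLSDProblem N (B'+1) S T)) :
    ((B'+1)^N ≤ M.choose t * 2^(t*w)) ∧
    (∀ ε : ℝ, 0 < ε → ε ≤ 1 →
      ((t*w : ℕ) : ℝ) ≤ ((N:ℝ)/4) * ((B'+1 : ℕ) : ℝ)^((1:ℝ)-ε) →
      2*ε*Real.logb 2 ((B'+1 : ℕ) : ℝ) ≤ ((B'+1 : ℕ) : ℝ)^((1:ℝ)-ε) →
      ((B'+1 : ℕ) : ℝ) ^ ((ε/2) * (N:ℝ)) ≤ (M.choose t : ℝ) * 2^(N+1)) := by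
  classical
  set r : Finset (Fin M) → (Fin N → Finset (Fin (B'+1))) → (Fin M → Fin w → Bool) :=
    fun C T i => if i ∈ C then D T i else fun _ => false with hr
  set Yr : Finset (Fin M) → (Fin M → Fin w → Bool) → Finset (Fin N → Finset (Fin (B'+1))) :=
    fun C v => univ.filter (fun T => r C T = v) with hYr
  set Xr : Finset (Fin M) → (Fin M → Fin w → Bool) → Finset (Fin N → Fin (B'+1)) :=
    fun C v => univ.filter
      (fun S => ∀ T', r C T' = v → ¬ BLSDProblem N (B'+1) S T') with hXr
  set K : Finset (Finset (Fin M)) := Finset.powersetCard t univ with hK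
  set V : Finset (Fin M) → Finset (Fin M → Fin w → Bool) :=
    fun C => Finset.image (r C) univ with hV
  set FP : Finset ((Fin N → Fin (B'+1)) × (Fin N → Finset (Fin (B'+1)))) := univ.filter (fun p => ∀ i, p.1 i ∉ p.2 i) with hFP
  set a : Finset (Fin M) → (Fin M → Fin w → Bool) → Fin N → ℕ :=
    fun C v i => ((Xr C v).image (fun S => S i)).card with ha
  -- (1) covering inequality
  have hcover : FP.card ≤ ∑ C ∈ K, ∑ v ∈ V C, (Xr C v).card * (Yr C v).card := by
    have hsub : FP ⊆ K.biUnion (fun C => (V C).biUnion (fun v => Xr C v ×ˢ Yr C v)) := by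
      intro p hp
      rw [hFP, Finset.mem_filter] at hp
      obtain ⟨-, hp⟩ := hp
      rw [Finset.mem_biUnion]
      refine ⟨cert p.1 p.2, ?_, ?_⟩
      · rw [hK, Finset.mem_powersetCard]
        exact ⟨Finset.subset_univ _, hcard _ _⟩
      rw [Finset.mem_biUnion]
      refine ⟨r (cert p.1 p.2) p.2, Finset.mem_image_of_mem _ (Finset.mem_univ _), ?_⟩
      rw [Finset.mem_product]
      constructor
      · rw [hXr, Finset.mem_filter]
        refine ⟨Finset.mem_univ _, fun T' hT' hBL => ?_⟩
        have hagree : ∀ i ∈ cert p.1 p.2, D p.2 i = D T' i := by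
          intro i hi
          have := congrFun hT' i
          rw [hr] at this
          simpa [if_pos hi] using this.symm
        have := (hcert p.1 p.2 T' hagree).mp hBL
        obtain ⟨i, hi⟩ := this
        exact hp i hi
      · rw [hYr, Finset.mem_filter]
        exact ⟨Finset.mem_univ _, rfl⟩
    calc FP.card ≤ (K.biUnion (fun C => (V C).biUnion (fun v => Xr C v ×ˢ Yr C v))).card :=
          Finset.card_le_card hsub
      _ ≤ ∑ C ∈ K, ((V C).biUnion (fun v => Xr C v ×ˢ Yr C v)).card :=
          Finset.card_biUnion_le
      _ ≤ ∑ C ∈ K, ∑ v ∈ V C, (Xr C v ×ˢ Yr C v).card :=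
          Finset.sum_le_sum (fun C _ => Finset.card_biUnion_le)
      _ = ∑ C ∈ K, ∑ v ∈ V C, (Xr C v).card * (Yr C v).card := by
          simp [Finset.card_product]
  -- (2) X projection bound
  have hXle : ∀ C v, (Xr C v).card ≤ ∏ i, a C v i := by
    intro C v
    have hsub : Xr C v ⊆ Fintype.piFinset (fun i => (Xr C v).image (fun S => S i)) := by
      intro S hS
      rw [Fintype.mem_piFinset]
      exact fun i => Finset.mem_image_of_mem _ hS
    calc (Xr C v).card ≤ (Fintype.piFinset (fun i => (Xr C v).image (fun S => S i))).card :=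
          Finset.card_le_card hsub
      _ = ∏ i, a C v i := by rw [Fintype.card_piFinset]
  -- (4) Y bound
  have hYle : ∀ C v, (Yr C v).card ≤ ∏ i, 2^(B'+1 - a C v i) := by
    intro C v
    have hdisj : ∀ S ∈ Xr C v, ∀ T ∈ Yr C v, ∀ i, S i ∉ T i := by
      intro S hS T hT i hi
      rw [hXr, Finset.mem_filter] at hS
      rw [hYr, Finset.mem_filter] at hT
      exact hS.2 T hT.2 ⟨i, hi⟩
    have hsub : Yr C v ⊆ Fintype.piFinset
        (fun i => (univ \ (Xr C v).image (fun S => S i)).powerset) := by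
      intro T hT
      rw [Fintype.mem_piFinset]
      intro i
      rw [Finset.mem_powerset]
      intro b hb
      rw [Finset.mem_sdiff]
      refine ⟨Finset.mem_univ _, fun hmem => ?_⟩
      obtain ⟨S, hS, hSb⟩ := Finset.mem_image.mp hmem
      exact hdisj S hS T hT i (hSb ▸ hb)
    calc (Yr C v).card ≤ _ := Finset.card_le_card hsub
      _ = ∏ i, 2^(B'+1 - a C v i) := by
        rw [Fintype.card_piFinset]
        refine Finset.prod_congr rfl (fun i _ => ?_)
        rw [Finset.card_powerset, Finset.card_sdiff_of_subset (Finset.subset_univ _)]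
        simp [ha]
  -- (5)
  have haB : ∀ C v i, a C v i ≤ B'+1 := by
    intro C v i
    calc ((Xr C v).image (fun S => S i)).card ≤ (univ : Finset (Fin (B'+1))).card :=
          Finset.card_le_card (Finset.subset_univ _)
      _ = B'+1 := by simp
  -- (6)
  have hapos : ∀ C v, (Xr C v).Nonempty → ∀ i, 1 ≤ a C v i := by
    intro C v hne i
    exact Finset.card_pos.mpr (hne.image _)
  -- (7)
  have hVcard : ∀ C ∈ K, (V C).card ≤ 2^(t*w) := by
    intro C hC
    have hCt : C.card = t := (Finset.mem_powersetCard.mp hC).2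
    set g : (C → Fin w → Bool) → (Fin M → Fin w → Bool) :=
      fun f i => if h : i ∈ C then f ⟨i, h⟩ else fun _ => false with hg
    set rho : (Fin N → Finset (Fin (B'+1))) → (C → Fin w → Bool) :=
      fun T i => D T i.1 with hrho
    have hfact : ∀ T, r C T = g (rho T) := by
      intro T
      funext i
      rw [hr, hg, hrho]
      by_cases h : i ∈ C
      · simp [h]
      · simp [h]
    have himg : V C = (univ.image rho).image g := by
      rw [hV, Finset.image_image]
      refine Finset.image_congr (fun T _ => hfact T)
    calc (V C).card = ((univ.image rho).image g).card := by rw [himg]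
      _ ≤ (univ.image rho).card := Finset.card_image_le
      _ ≤ Fintype.card (C → Fin w → Bool) := by
          simpa using Finset.card_le_univ (univ.image rho)
      _ = 2^(t*w) := by
        rw [Fintype.card_fun, Fintype.card_fun, Fintype.card_bool, Fintype.card_coe,
          Fintype.card_fin, hCt, ← pow_mul, mul_comm w t]
  -- (8)
  have hYsum : ∀ C, ∑ v ∈ V C, (Yr C v).card = 2^((B'+1)*N) := by
    intro C
    have := Finset.card_eq_sum_card_fiberwise
      (f := r C) (s := (univ : Finset (Fin N → Finset (Fin (B'+1))))) (t := V C)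
      (fun T _ => Finset.mem_image_of_mem _ (Finset.mem_univ T))
    rw [Finset.card_univ] at this
    rw [hYr]
    rw [← this]
    rw [Fintype.card_fun, Fintype.card_finset, Fintype.card_fin, Fintype.card_fin,
      ← pow_mul]
  -- (9)
  have hFPge : (B'+1)^N * 2^(B'*N) ≤ FP.card := by
    set phi : ((Fin N → Fin (B'+1)) × (Fin N → Finset (Fin B'))) →
        ((Fin N → Fin (B'+1)) × (Fin N → Finset (Fin (B'+1)))) :=
      fun p => (p.1, fun i => (p.2 i).map ⟨(p.1 i).succAbove, Fin.succAbove_right_injective⟩)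
      with hphi
    have hmaps : ∀ p, phi p ∈ FP := by
      intro p
      rw [hFP, Finset.mem_filter]
      refine ⟨Finset.mem_univ _, fun i hi => ?_⟩
      rw [hphi] at hi
      simp only [Finset.mem_map] at hi
      obtain ⟨b, _, hb⟩ := hi
      exact Fin.succAbove_ne (p.1 i) b hb
    have hinj : Function.Injective phi := by
      intro p q hpq
      rw [hphi, Prod.mk.injEq] at hpq
      obtain ⟨h1, h2⟩ := hpq
      have h1' : p.1 = q.1 := h1
      refine Prod.ext h1' ?_
      funext i
      have h2i := congrFun h2 i
      rw [h1'] at h2i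
      exact Finset.map_injective _ h2i
    calc (B'+1)^N * 2^(B'*N)
        = Fintype.card ((Fin N → Fin (B'+1)) × (Fin N → Finset (Fin B'))) := by
          rw [Fintype.card_prod, Fintype.card_fun, Fintype.card_fun, Fintype.card_finset]
          simp [← pow_mul]
      _ = (univ : Finset ((Fin N → Fin (B'+1)) × (Fin N → Finset (Fin B')))).card := by
          rw [Finset.card_univ]
      _ ≤ FP.card := Finset.card_le_card_of_injOn phi (fun p _ => hmaps p)
          (Function.Injective.injOn hinj)
  have hKcard : K.card = M.choose t := by
    rw [hK, Finset.card_powersetCard, Finset.card_univ, Fintype.card_fin]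
  have hmass : ∀ C v, (Xr C v).card * (Yr C v).card ≤ 2^(B'*N) := by
    intro C v
    rcases (Xr C v).eq_empty_or_nonempty with he | hne
    · rw [he]; simp
    · calc (Xr C v).card * (Yr C v).card
          ≤ (∏ i, a C v i) * (∏ i, 2^(B'+1 - a C v i)) :=
            Nat.mul_le_mul (hXle C v) (hYle C v)
        _ = ∏ i, (a C v i * 2^(B'+1 - a C v i)) := by rw [← Finset.prod_mul_distrib]
        _ ≤ ∏ _i : Fin N, 2^B' := by
            refine Finset.prod_le_prod' (fun i _ => ?_)
            have h1 : 1 ≤ a C v i := hapos C v hne i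
            have h2 : a C v i ≤ B'+1 := haB C v i
            have h3 : a C v i ≤ 2^(a C v i - 1) := by
              have := Nat.lt_two_pow_self (n := a C v i - 1)
              omega
            calc a C v i * 2^(B'+1 - a C v i) ≤ 2^(a C v i - 1) * 2^(B'+1 - a C v i) :=
                  Nat.mul_le_mul_right _ h3
              _ = 2^B' := by rw [← pow_add]; congr 1; omega
        _ = 2^(B'*N) := by rw [Finset.prod_const, Finset.card_univ, Fintype.card_fin, ← pow_mul]
  constructor
  · -- crude bound
    have htot : (B'+1)^N * 2^(B'*N) ≤ M.choose t * 2^(t*w) * 2^(B'*N) := by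
      calc (B'+1)^N * 2^(B'*N) ≤ FP.card := hFPge
        _ ≤ ∑ C ∈ K, ∑ v ∈ V C, (Xr C v).card * (Yr C v).card := hcover
        _ ≤ ∑ C ∈ K, (2^(t*w) * 2^(B'*N)) := by
            refine Finset.sum_le_sum (fun C hC => ?_)
            calc ∑ v ∈ V C, (Xr C v).card * (Yr C v).card
                ≤ ∑ _v ∈ V C, 2^(B'*N) := Finset.sum_le_sum (fun v _ => hmass C v)
              _ = (V C).card * 2^(B'*N) := by rw [Finset.sum_const, smul_eq_mul]
              _ ≤ 2^(t*w) * 2^(B'*N) := Nat.mul_le_mul_right _ (hVcard C hC)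
        _ = M.choose t * 2^(t*w) * 2^(B'*N) := by
            rw [Finset.sum_const, smul_eq_mul, hKcard, mul_assoc]
    exact Nat.le_of_mul_le_mul_right htot (Nat.pow_pos (by norm_num))
  · -- refined bound
    intro eps heps heps1 hyp1 hyp2
    have hB1 : 1 ≤ B' := hB'
    set Br : ℝ := ((B'+1 : ℕ) : ℝ) with hBrdef
    have hBr2 : (2:ℝ) ≤ Br := by
      rw [hBrdef]; exact_mod_cast Nat.succ_le_succ hB1
    have hBr1 : (1:ℝ) < Br := lt_of_lt_of_le one_lt_two hBr2
    have hBr0 : (0:ℝ) < Br := lt_trans one_pos hBr1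
    set L : ℝ := Real.logb 2 Br with hLdef
    have hL : Br = (2:ℝ) ^ L := (Real.rpow_logb (by norm_num) (by norm_num) hBr0).symm
    have hL0 : 0 ≤ L := Real.logb_nonneg (by norm_num) (le_of_lt hBr1)
    have hN0 : (0:ℝ) ≤ (N:ℝ) := Nat.cast_nonneg N
    set sigma : ℝ := ((N:ℝ)/2) * Br ^ ((1:ℝ)-eps) with hsigmadef
    set beta : ℝ := Br ^ ((1-eps/2)*(N:ℝ)) with hbetadef
    have hbeta0 : 0 < beta := Real.rpow_pos_of_pos hBr0 _
    have hBrpow0 : (0:ℝ) < Br ^ ((1:ℝ)-eps) := Real.rpow_pos_of_pos hBr0 _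
    -- per-C bound
    have hperC : ∀ C ∈ K, ∑ v ∈ V C, ((Xr C v).card : ℝ) * ((Yr C v).card : ℝ) ≤
        2 * beta * 2^((B'+1)*N) := by
      intro C hC
      set p : (Fin M → Fin w → Bool) → Prop :=
        fun v => ((∏ i, a C v i : ℕ) : ℝ) ≤ beta with hp
      have hsplit := Finset.sum_filter_add_sum_filter_not (V C) p
        (fun v => ((Xr C v).card : ℝ) * ((Yr C v).card : ℝ))
      -- small part
      have hsmall : ∑ v ∈ (V C).filter p, ((Xr C v).card : ℝ) * ((Yr C v).card : ℝ) ≤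
          beta * 2^((B'+1)*N) := by
        calc ∑ v ∈ (V C).filter p, ((Xr C v).card : ℝ) * ((Yr C v).card : ℝ)
            ≤ ∑ v ∈ (V C).filter p, beta * ((Yr C v).card : ℝ) := by
              refine Finset.sum_le_sum (fun v hv => ?_)
              have hpv : ((∏ i, a C v i : ℕ) : ℝ) ≤ beta := (Finset.mem_filter.mp hv).2
              refine mul_le_mul_of_nonneg_right ?_ (Nat.cast_nonneg _)
              calc ((Xr C v).card : ℝ) ≤ ((∏ i, a C v i : ℕ) : ℝ) := by
                    exact_mod_cast hXle C v
                _ ≤ beta := hpv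
          _ = beta * ∑ v ∈ (V C).filter p, ((Yr C v).card : ℝ) := by
              rw [Finset.mul_sum]
          _ ≤ beta * ∑ v ∈ V C, ((Yr C v).card : ℝ) := by
              refine mul_le_mul_of_nonneg_left ?_ (le_of_lt hbeta0)
              exact Finset.sum_le_sum_of_subset_of_nonneg (Finset.filter_subset _ _)
                (fun _ _ _ => Nat.cast_nonneg _)
          _ = beta * 2^((B'+1)*N) := by
              congr 1
              rw [← Nat.cast_sum]
              rw [hYsum C]
              push_cast
              ring
      -- big part
      have hbig : ∑ v ∈ (V C).filter (fun v => ¬ p v),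
          ((Xr C v).card : ℝ) * ((Yr C v).card : ℝ) ≤ beta * 2^((B'+1)*N) := by
        have hterm : ∀ v ∈ (V C).filter (fun v => ¬ p v),
            ((Xr C v).card : ℝ) * ((Yr C v).card : ℝ) ≤
              Br ^ (N:ℕ) * (2:ℝ) ^ ((((B'+1)*N : ℕ) : ℝ) - sigma) := by
          intro v hv
          have hpv : ¬ ((∏ i, a C v i : ℕ) : ℝ) ≤ beta := (Finset.mem_filter.mp hv).2
          rcases (Xr C v).eq_empty_or_nonempty with he | hne
          · rw [he]
            simp only [Finset.card_empty, Nat.cast_zero, zero_mul]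
            positivity
          -- big: product of a exceeds beta
          have hprodgt : beta < ∏ i, ((a C v i : ℕ) : ℝ) := by
            rw [← Nat.cast_prod]
            exact lt_of_not_ge hpv
          set bigs := univ.filter (fun i => Br ^ ((1:ℝ)-eps) < ((a C v i : ℕ) : ℝ))
            with hbigsdef
          have hcards : bigs.card + (univ.filter
              (fun i => ¬ (Br ^ ((1:ℝ)-eps) < ((a C v i : ℕ) : ℝ)))).card = N := by
            rw [hbigsdef, Finset.card_filter_add_card_filter_not]
            simp
          have hprodle : ∏ i, ((a C v i : ℕ) : ℝ) ≤
              Br ^ ((bigs.card : ℝ) + (1-eps)*((N:ℝ) - (bigs.card : ℝ))) := by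
            have step1 : ∏ i, ((a C v i : ℕ) : ℝ) ≤
                ∏ i, (if Br ^ ((1:ℝ)-eps) < ((a C v i : ℕ) : ℝ) then Br
                  else Br ^ ((1:ℝ)-eps)) := by
              refine Finset.prod_le_prod (fun i _ => Nat.cast_nonneg _) (fun i _ => ?_)
              by_cases hbi : Br ^ ((1:ℝ)-eps) < ((a C v i : ℕ) : ℝ)
              · rw [if_pos hbi]
                rw [hBrdef]
                exact_mod_cast haB C v i
              · rw [if_neg hbi]
                exact le_of_not_gt hbi
            have step2 : ∏ i, (if Br ^ ((1:ℝ)-eps) < ((a C v i : ℕ) : ℝ) then Br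
                else Br ^ ((1:ℝ)-eps)) =
                Br ^ (bigs.card : ℕ) * (Br ^ ((1:ℝ)-eps)) ^
                  ((univ.filter (fun i => ¬ (Br ^ ((1:ℝ)-eps) < ((a C v i : ℕ) : ℝ)))).card : ℕ) := by
              rw [Finset.prod_ite]
              rw [Finset.prod_const, Finset.prod_const]
            have step3 : Br ^ (bigs.card : ℕ) * (Br ^ ((1:ℝ)-eps)) ^
                  ((univ.filter (fun i => ¬ (Br ^ ((1:ℝ)-eps) < ((a C v i : ℕ) : ℝ)))).card : ℕ)
                = Br ^ ((bigs.card : ℝ) + (1-eps)*((N:ℝ) - (bigs.card : ℝ))) := by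
              rw [← Real.rpow_natCast Br bigs.card,
                ← Real.rpow_natCast (Br ^ ((1:ℝ)-eps)) _,
                ← Real.rpow_mul (le_of_lt hBr0), ← Real.rpow_add hBr0]
              congr 1
              have : ((univ.filter (fun i => ¬ (Br ^ ((1:ℝ)-eps) < ((a C v i : ℕ) : ℝ)))).card : ℝ)
                  = (N:ℝ) - (bigs.card : ℝ) := by
                have := hcards
                have h2 : ((bigs.card : ℕ) : ℝ) + (((univ.filter
                  (fun i => ¬ (Br ^ ((1:ℝ)-eps) < ((a C v i : ℕ) : ℝ)))).card : ℕ) : ℝ) = (N:ℝ) := by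
                  exact_mod_cast congrArg (fun x : ℕ => (x:ℝ)) this
                linarith
              rw [this]
            calc ∏ i, ((a C v i : ℕ) : ℝ) ≤ _ := step1
              _ = _ := step2
              _ = _ := step3
          have hkgt : (N:ℝ)/2 < (bigs.card : ℝ) := by
            have hlt : beta < Br ^ ((bigs.card : ℝ) + (1-eps)*((N:ℝ) - (bigs.card : ℝ))) :=
              lt_of_lt_of_le hprodgt hprodle
            rw [hbetadef] at hlt
            have := (Real.rpow_lt_rpow_left_iff hBr1).mp hlt
            nlinarith [this, heps]
          have hksum : sigma ≤ ∑ i, ((a C v i : ℕ) : ℝ) := by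
            calc sigma = ((N:ℝ)/2) * Br ^ ((1:ℝ)-eps) := hsigmadef
              _ ≤ (bigs.card : ℝ) * Br ^ ((1:ℝ)-eps) := by
                  refine mul_le_mul_of_nonneg_right (le_of_lt hkgt) (le_of_lt hBrpow0)
              _ ≤ ∑ i ∈ bigs, ((a C v i : ℕ) : ℝ) := by
                  have := Finset.card_nsmul_le_sum bigs
                    (fun i => ((a C v i : ℕ) : ℝ)) (Br ^ ((1:ℝ)-eps))
                    (fun i hi => le_of_lt (Finset.mem_filter.mp hi).2)
                  rw [nsmul_eq_mul] at this
                  linarith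
              _ ≤ ∑ i, ((a C v i : ℕ) : ℝ) := by
                  refine Finset.sum_le_sum_of_subset_of_nonneg (Finset.subset_univ _)
                    (fun _ _ _ => Nat.cast_nonneg _)
          -- now bound |Y|
          have hYv : ((Yr C v).card : ℝ) ≤ (2:ℝ) ^ ((((B'+1)*N : ℕ) : ℝ) - sigma) := by
            have h1 : ((Yr C v).card : ℝ) ≤ ((∏ i, 2^(B'+1 - a C v i) : ℕ) : ℝ) := by
              exact_mod_cast hYle C v
            have h2 : (∏ i, 2^(B'+1 - a C v i) : ℕ) = 2^(∑ i, (B'+1 - a C v i)) := by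
              rw [Finset.prod_pow_eq_pow_sum]
            have h3 : ((∑ i, (B'+1 - a C v i) : ℕ) : ℝ) =
                (((B'+1)*N : ℕ) : ℝ) - ∑ i, ((a C v i : ℕ) : ℝ) := by
              rw [Nat.cast_sum]
              have : ∀ i ∈ (univ : Finset (Fin N)), ((B'+1 - a C v i : ℕ) : ℝ)
                  = ((B'+1 : ℕ):ℝ) - ((a C v i : ℕ):ℝ) := by
                intro i _
                rw [Nat.cast_sub (haB C v i)]
              rw [Finset.sum_congr rfl this, Finset.sum_sub_distrib]
              congr 1
              rw [Finset.sum_const, Finset.card_univ, Fintype.card_fin, nsmul_eq_mul]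
              push_cast
              ring
            calc ((Yr C v).card : ℝ) ≤ ((2^(∑ i, (B'+1 - a C v i)) : ℕ) : ℝ) := by
                  rw [← h2]; exact h1
              _ = (2:ℝ) ^ (((∑ i, (B'+1 - a C v i) : ℕ)) : ℝ) := by
                  rw [Real.rpow_natCast]
                  push_cast
                  ring
              _ ≤ (2:ℝ) ^ ((((B'+1)*N : ℕ) : ℝ) - sigma) := by
                  refine Real.rpow_le_rpow_of_exponent_le one_le_two ?_
                  rw [h3]
                  linarith
          have hXv : ((Xr C v).card : ℝ) ≤ Br ^ (N:ℕ) := by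
            have : (Xr C v).card ≤ (B'+1)^N := by
              calc (Xr C v).card ≤ Fintype.card (Fin N → Fin (B'+1)) :=
                    Finset.card_le_univ _
                _ = (B'+1)^N := by rw [Fintype.card_fun]; simp
            rw [hBrdef]
            exact_mod_cast this
          exact mul_le_mul hXv hYv (Nat.cast_nonneg _) (by positivity)
        calc ∑ v ∈ (V C).filter (fun v => ¬ p v),
            ((Xr C v).card : ℝ) * ((Yr C v).card : ℝ)
            ≤ ∑ _v ∈ (V C).filter (fun v => ¬ p v),
              Br ^ (N:ℕ) * (2:ℝ) ^ ((((B'+1)*N : ℕ) : ℝ) - sigma) :=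
              Finset.sum_le_sum hterm
          _ = ((V C).filter (fun v => ¬ p v)).card *
              (Br ^ (N:ℕ) * (2:ℝ) ^ ((((B'+1)*N : ℕ) : ℝ) - sigma)) := by
              rw [Finset.sum_const, nsmul_eq_mul]
          _ ≤ (2:ℝ)^(t*w) * (Br ^ (N:ℕ) * (2:ℝ) ^ ((((B'+1)*N : ℕ) : ℝ) - sigma)) := by
              refine mul_le_mul_of_nonneg_right ?_ (by positivity)
              have h1 : ((V C).filter (fun v => ¬ p v)).card ≤ (V C).card :=
                Finset.card_le_card (Finset.filter_subset _ _)
              have h2 := hVcard C hC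
              calc (((V C).filter (fun v => ¬ p v)).card : ℝ) ≤ ((V C).card : ℝ) := by
                    exact_mod_cast h1
                _ ≤ ((2^(t*w) : ℕ) : ℝ) := by exact_mod_cast h2
                _ = (2:ℝ)^(t*w) := by push_cast; ring
          _ ≤ beta * 2^((B'+1)*N) := by
              -- convert everything to rpow of 2 and compare exponents
              have e1 : (2:ℝ)^(t*w) = (2:ℝ) ^ ((t*w : ℕ) : ℝ) := by
                rw [Real.rpow_natCast]
              have e2 : Br ^ (N:ℕ) = (2:ℝ) ^ (L * (N:ℝ)) := by
                rw [← Real.rpow_natCast Br N, hL, ← Real.rpow_mul (by norm_num)]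
              have e3 : beta = (2:ℝ) ^ (L * ((1-eps/2)*(N:ℝ))) := by
                rw [hbetadef, hL, ← Real.rpow_mul (by norm_num)]
              have e4 : (2:ℝ)^((B'+1)*N) = (2:ℝ) ^ ((((B'+1)*N : ℕ)) : ℝ) := by
                rw [Real.rpow_natCast]
              rw [e1, e2, e3, e4, ← Real.rpow_add (by norm_num : (0:ℝ) < 2),
                ← Real.rpow_add (by norm_num : (0:ℝ) < 2),
                ← Real.rpow_add (by norm_num : (0:ℝ) < 2)]
              refine Real.rpow_le_rpow_of_exponent_le one_le_two ?_
              -- tw + L*N + ((B'+1)N - sigma) ≤ L*(1-eps/2)*N + (B'+1)N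
              have key : ((t*w : ℕ) : ℝ) + (eps/2)*(N:ℝ)*L ≤ sigma := by
                rw [hsigmadef]
                nlinarith [hyp1, hyp2, hN0, mul_le_mul_of_nonneg_left hyp2 (by positivity : (0:ℝ) ≤ (N:ℝ)/4)]
              nlinarith [key]
      -- combine
      calc ∑ v ∈ V C, ((Xr C v).card : ℝ) * ((Yr C v).card : ℝ)
          = (∑ v ∈ (V C).filter p, ((Xr C v).card : ℝ) * ((Yr C v).card : ℝ)) +
            ∑ v ∈ (V C).filter (fun v => ¬ p v),
              ((Xr C v).card : ℝ) * ((Yr C v).card : ℝ) := hsplit.symm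
        _ ≤ beta * 2^((B'+1)*N) + beta * 2^((B'+1)*N) := add_le_add hsmall hbig
        _ = 2 * beta * 2^((B'+1)*N) := by ring
    -- total
    have hcoverR : ((FP.card : ℕ) : ℝ) ≤
        ∑ C ∈ K, ∑ v ∈ V C, ((Xr C v).card : ℝ) * ((Yr C v).card : ℝ) := by
      have := hcover
      calc ((FP.card : ℕ) : ℝ) ≤ ((∑ C ∈ K, ∑ v ∈ V C, (Xr C v).card * (Yr C v).card : ℕ) : ℝ) := by
            exact_mod_cast this
        _ = _ := by push_cast; ring
    have htotal : Br ^ (N:ℕ) * (2:ℝ)^(B'*N) ≤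
        (M.choose t : ℝ) * (2 * beta * 2^((B'+1)*N)) := by
      calc Br ^ (N:ℕ) * (2:ℝ)^(B'*N) = (((B'+1)^N * 2^(B'*N) : ℕ) : ℝ) := by
            rw [hBrdef]; push_cast; ring
        _ ≤ ((FP.card : ℕ) : ℝ) := by exact_mod_cast hFPge
        _ ≤ ∑ C ∈ K, ∑ v ∈ V C, ((Xr C v).card : ℝ) * ((Yr C v).card : ℝ) := hcoverR
        _ ≤ ∑ _C ∈ K, 2 * beta * 2^((B'+1)*N) := Finset.sum_le_sum hperC
        _ = (K.card : ℝ) * (2 * beta * 2^((B'+1)*N)) := by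
            rw [Finset.sum_const, nsmul_eq_mul]
        _ = (M.choose t : ℝ) * (2 * beta * 2^((B'+1)*N)) := by rw [hKcard]
    -- cancel
    have hP : (0:ℝ) < (2:ℝ)^(B'*N) := by positivity
    have hBN : (2:ℝ)^((B'+1)*N) = (2:ℝ)^(B'*N) * 2^N := by
      rw [← pow_add]; congr 1; ring
    have hcancel : Br ^ (N:ℕ) ≤ (M.choose t : ℝ) * 2^(N+1) * beta := by
      have h2 : Br ^ (N:ℕ) * (2:ℝ)^(B'*N) ≤
          ((M.choose t : ℝ) * 2^(N+1) * beta) * (2:ℝ)^(B'*N) := by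
        calc Br ^ (N:ℕ) * (2:ℝ)^(B'*N) ≤
            (M.choose t : ℝ) * (2 * beta * 2^((B'+1)*N)) := htotal
          _ = ((M.choose t : ℝ) * 2^(N+1) * beta) * (2:ℝ)^(B'*N) := by
              rw [hBN]; ring
      exact le_of_mul_le_mul_right h2 hP
    -- divide by beta
    have hfinal : Br ^ ((eps/2) * (N:ℝ)) ≤ (M.choose t : ℝ) * 2^(N+1) := by
      have hsplitpow : Br ^ (N:ℕ) = Br ^ ((eps/2) * (N:ℝ)) * beta := by
        rw [hbetadef, ← Real.rpow_natCast Br N, ← Real.rpow_add hBr0]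
        congr 1
        ring
      rw [hsplitpow] at hcancel
      exact le_of_mul_le_mul_right hcancel hbeta0
    exact hfinal

end Master

lemma choose_log_bound (M t : ℕ) (ht : 0 < t) (h2t : 2*t ≤ M) :
    Real.logb 2 (M.choose t) ≤ 3 * t * Real.logb 2 ((M:ℝ)/t) := by
  have ht0 : (0:ℝ) < t := by exact_mod_cast ht
  have hM0 : (0:ℝ) < M := by
    have : 0 < M := by omega
    exact_mod_cast this
  have he : (0:ℝ) < Real.exp 1 := Real.exp_pos 1
  have hMt2 : (2:ℝ) ≤ (M:ℝ)/t := by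
    rw [le_div_iff₀ ht0]
    exact_mod_cast h2t
  have hlog1 : 1 ≤ Real.logb 2 ((M:ℝ)/t) := by
    calc (1:ℝ) = Real.logb 2 2 := (Real.logb_self_eq_one (by norm_num : (1:ℝ) < 2)).symm
      _ ≤ Real.logb 2 ((M:ℝ)/t) := Real.logb_le_logb_of_le (by norm_num : (1:ℝ) < 2) (by norm_num) hMt2
  have hchle : (M.choose t : ℝ) ≤ ((M:ℝ) * Real.exp 1 / t)^t := by
    have h1 : (M.choose t : ℝ) ≤ (M:ℝ)^t / t.factorial := Nat.choose_le_pow_div t M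
    have h2 : ((t:ℝ)/Real.exp 1)^t ≤ (t.factorial : ℝ) := fact_lb t
    have hfac0 : (0:ℝ) < (t.factorial : ℝ) := by exact_mod_cast t.factorial_pos
    have h3 : (M:ℝ)^t / t.factorial ≤ (M:ℝ)^t / ((t:ℝ)/Real.exp 1)^t := by
      apply div_le_div_of_nonneg_left (by positivity) (by positivity) h2
    calc (M.choose t : ℝ) ≤ (M:ℝ)^t / t.factorial := h1
      _ ≤ (M:ℝ)^t / ((t:ℝ)/Real.exp 1)^t := h3
      _ = ((M:ℝ) * Real.exp 1 / t)^t := by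
          rw [← div_pow]
          congr 1
          field_simp
  have hch0 : (0:ℝ) < (M.choose t : ℝ) := by
    exact_mod_cast Nat.choose_pos (by omega : t ≤ M)
  calc Real.logb 2 (M.choose t) ≤ Real.logb 2 (((M:ℝ) * Real.exp 1 / t)^t) :=
        Real.logb_le_logb_of_le (by norm_num : (1:ℝ) < 2) hch0 hchle
    _ = t * Real.logb 2 ((M:ℝ) * Real.exp 1 / t) := by rw [Real.logb_pow]
    _ = t * Real.logb 2 ((M:ℝ)/t * Real.exp 1) := by ring_nf
    _ = t * (Real.logb 2 ((M:ℝ)/t) + Real.logb 2 (Real.exp 1)) := by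
        rw [Real.logb_mul (by positivity) (by positivity)]
    _ ≤ t * (Real.logb 2 ((M:ℝ)/t) + 2) := by
        have : Real.logb 2 (Real.exp 1) ≤ 2 := by
          calc Real.logb 2 (Real.exp 1) ≤ Real.logb 2 4 := by
                apply Real.logb_le_logb_of_le (by norm_num : (1:ℝ) < 2) he
                have := Real.exp_one_lt_d9
                linarith
            _ = 2 := by
              rw [show (4:ℝ) = 2^(2:ℕ) by norm_num, Real.logb_pow,
                Real.logb_self_eq_one (by norm_num : (1:ℝ) < 2)]
              norm_num
        nlinarith [ht0]
    _ ≤ 3 * t * Real.logb 2 ((M:ℝ)/t) := by nlinarith [ht0, hlog1]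

end BLSDAux

set_option maxHeartbeats 4000000 in
/-- The certificate lower bound for BLSD: for every `λ > 0`
there is `c > 0` such that whenever `M > t`, `B ≥ 2`, and BLSD with parameters
`N, B` has `(M, w, t)`-certificates, then `t ≥ c·N·B^{1−λ}/w` or
`t·log₂(M/t) ≥ c·N·log₂ B`. -/
theorem blsd_lower_bound (lam : ℝ) (hlam : 0 < lam) :
    ∃ c : ℝ, 0 < c ∧
      ∀ N B M w t : ℕ,
        0 < N → 2 ≤ B → 0 < M → 0 < w → 0 < t → t < M →
        HasCertificates (BLSDProblem N B) M w t →
        (c * N * (B : ℝ) ^ (1 - lam) / w ≤ (t : ℝ) ∨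
          c * N * Real.logb 2 B ≤ (t : ℝ) * Real.logb 2 ((M : ℝ) / t)) := by
  classical
  set eps : ℝ := min lam (1/2) with hepsdef
  have heps : 0 < eps := lt_min hlam (by norm_num)
  have hepshalf : eps ≤ 1/2 := min_le_right _ _
  have hepslam : eps ≤ lam := min_le_left _ _
  have heps1 : eps ≤ 1 := le_trans hepshalf (by norm_num)
  set K0 : ℝ := 2^((8:ℝ)/eps) + 2 with hK0def
  have hK0pos : 0 < K0 := by positivity
  have hK02 : 2 ≤ K0 := by
    have h' : (0:ℝ) ≤ 2^((8:ℝ)/eps) := by positivity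
    rw [hK0def]
    linarith
  set c : ℝ := min (min (1/4) (eps/12)) (min (1/(2*K0)) (1/6)) with hcdef
  have hc0 : 0 < c := by
    apply lt_min (lt_min (by norm_num) (by positivity))
    exact lt_min (by positivity) (by norm_num)
  have hc14 : c ≤ 1/4 := le_trans (min_le_left _ _) (min_le_left _ _)
  have hc12 : c ≤ eps/12 := le_trans (min_le_left _ _) (min_le_right _ _)
  have hc2K0 : c ≤ 1/(2*K0) := le_trans (min_le_right _ _) (min_le_left _ _)
  have hc16 : c ≤ 1/6 := le_trans (min_le_right _ _) (min_le_right _ _)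
  clear_value eps K0 c
  refine ⟨c, hc0, ?_⟩
  intro N B M w t hN hB hM hw ht htM hcert
  obtain ⟨B', rfl⟩ : ∃ B', B = B'+1 := ⟨B-1, by omega⟩
  have hB' : 1 ≤ B' := by omega
  obtain ⟨D, hD⟩ := hcert
  choose cert hcard hkey using hD
  have hcertP : ∀ S T T', (∀ i ∈ cert S T, D T i = D T' i) →
      (BLSDProblem N (B'+1) S T' ↔ BLSDProblem N (B'+1) S T) :=
    fun S T T' h => iff_of_eq (hkey S T T' h)
  have hDinj : ∀ (S : Fin N → Fin (B'+1)) T T', D T = D T' →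
      (BLSDProblem N (B'+1) S T ↔ BLSDProblem N (B'+1) S T') := by
    intro S T T' h
    exact (hcertP S T T' (fun i _ => congrFun h i)).symm
  have hinj := inj_bound D hDinj
  obtain ⟨hcrude, hrefined⟩ := master hN hB' D cert hcard hcertP
  -- real abbreviations
  set Br : ℝ := ((B'+1 : ℕ) : ℝ) with hBrdef
  have hBr2 : (2:ℝ) ≤ Br := by rw [hBrdef]; exact_mod_cast Nat.succ_le_succ hB'
  have hBr1 : (1:ℝ) < Br := lt_of_lt_of_le one_lt_two hBr2
  have hBr0 : (0:ℝ) < Br := lt_trans one_pos hBr1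
  set L : ℝ := Real.logb 2 Br with hLdef
  have hL1 : 1 ≤ L := by
    calc (1:ℝ) = Real.logb 2 2 := (Real.logb_self_eq_one (by norm_num : (1:ℝ) < 2)).symm
      _ ≤ L := Real.logb_le_logb_of_le (by norm_num : (1:ℝ) < 2) (by norm_num) hBr2
  have hL0 : 0 ≤ L := le_trans zero_le_one hL1
  clear_value Br L
  have hw0 : (0:ℝ) < w := by exact_mod_cast hw
  have ht0 : (0:ℝ) < t := by exact_mod_cast ht
  have hN0 : (0:ℝ) < N := by exact_mod_cast hN
  have hch0 : (0:ℝ) < (M.choose t : ℝ) := by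
    exact_mod_cast Nat.choose_pos (le_of_lt htM)
  have hBlamle : Br^(1-lam) ≤ Br^(1-eps) :=
    Real.rpow_le_rpow_of_exponent_le (le_of_lt hBr1) (by linarith)
  have hBrpow_le_Br : Br^(1-lam) ≤ Br := by
    calc Br^(1-lam) ≤ Br^(1:ℝ) :=
          Real.rpow_le_rpow_of_exponent_le (le_of_lt hBr1) (by linarith)
      _ = Br := Real.rpow_one Br
  have hBlam0 : (0:ℝ) < Br^(1-lam) := Real.rpow_pos_of_pos hBr0 _
  have hBeps0 : (0:ℝ) < Br^(1-eps) := Real.rpow_pos_of_pos hBr0 _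
  -- helper: establishing the left disjunct
  have hleft : ∀ d : ℝ, c ≤ d → d * N * Br^(1-lam) ≤ (t:ℝ)*w →
      c * N * Br ^ (1-lam) / w ≤ (t:ℝ) := by
    intro d hd h
    rw [div_le_iff₀ hw0]
    calc c * N * Br^(1-lam) ≤ d * N * Br^(1-lam) := by
          apply mul_le_mul_of_nonneg_right _ (le_of_lt hBlam0)
          exact mul_le_mul_of_nonneg_right hd (le_of_lt hN0)
      _ ≤ (t:ℝ)*w := h
  by_cases hcase1 : (1/4 : ℝ) * N * Br^(1-eps) ≤ (t:ℝ)*w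
  · left
    apply hleft (1/4) hc14
    calc (1/4 : ℝ) * N * Br^(1-lam) ≤ (1/4 : ℝ) * N * Br^(1-eps) := by
          apply mul_le_mul_of_nonneg_left hBlamle (by positivity)
      _ ≤ (t:ℝ)*w := hcase1
  push_neg at hcase1
  by_cases hcase2 : (M:ℝ) < 2*t
  · left
    apply hleft (1/4) hc14
    have hinjR : (B':ℝ) * N ≤ (w:ℝ) * M := by exact_mod_cast hinj
    have hBr2B' : Br ≤ 2 * (B':ℝ) := by
      rw [hBrdef]
      have : (B':ℕ) + 1 ≤ 2 * B' := by omega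
      exact_mod_cast this
    calc (1/4 : ℝ) * N * Br^(1-lam) ≤ (1/4 : ℝ) * N * Br := by
          apply mul_le_mul_of_nonneg_left hBrpow_le_Br (by positivity)
      _ ≤ (1/4 : ℝ) * N * (2*B') := by
          apply mul_le_mul_of_nonneg_left hBr2B' (by positivity)
      _ = (1/2) * ((B':ℝ) * N) := by ring
      _ ≤ (1/2) * ((w:ℝ) * M) := by linarith
      _ ≤ (1/2) * ((w:ℝ) * (2*t)) := by
          have := mul_le_mul_of_nonneg_left (le_of_lt hcase2) (le_of_lt hw0)
          linarith
      _ = (t:ℝ)*w := by ring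
  push_neg at hcase2
  have h2t : 2*t ≤ M := by exact_mod_cast hcase2
  have hMt2 : (2:ℝ) ≤ (M:ℝ)/t := by
    rw [le_div_iff₀ ht0]
    exact_mod_cast h2t
  have hlog1 : 1 ≤ Real.logb 2 ((M:ℝ)/t) := by
    calc (1:ℝ) = Real.logb 2 2 := (Real.logb_self_eq_one (by norm_num : (1:ℝ) < 2)).symm
      _ ≤ Real.logb 2 ((M:ℝ)/t) :=
        Real.logb_le_logb_of_le (by norm_num : (1:ℝ) < 2) (by norm_num) hMt2
  have hchooselog := choose_log_bound M t ht h2t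
  by_cases hreg : 8 ≤ eps*L ∧ 2*eps*L ≤ Br^(1-eps)
  · right
    have href := hrefined eps heps heps1 (by push_cast; linarith) hreg.2
    have hlhs : Real.logb 2 (Br ^ ((eps/2) * (N:ℝ))) = (eps/2) * N * L := by
      rw [Real.logb_rpow_eq_mul_logb_of_pos hBr0, ← hLdef]
    have hrhs : Real.logb 2 ((M.choose t : ℝ) * 2^(N+1)) =
        Real.logb 2 (M.choose t) + (N+1 : ℝ) := by
      rw [Real.logb_mul (ne_of_gt hch0) (by positivity)]
      congr 1
      rw [Real.logb_pow, Real.logb_self_eq_one (by norm_num : (1:ℝ) < 2)]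
      push_cast
      ring
    have hlog : (eps/2) * N * L ≤ Real.logb 2 (M.choose t) + (N+1 : ℝ) := by
      rw [← hlhs, ← hrhs]
      exact Real.logb_le_logb_of_le (by norm_num : (1:ℝ) < 2)
        (Real.rpow_pos_of_pos hBr0 _) href
    have hN1 : (N:ℝ) + 1 ≤ (eps/4) * N * L := by
      have h8 := hreg.1
      have h2N : 2 * (N:ℝ) ≤ (eps/4) * N * L := by
        have hh := mul_le_mul_of_nonneg_left h8 (by positivity : (0:ℝ) ≤ (N:ℝ)/4)
        nlinarith
      have : (N:ℝ) + 1 ≤ 2 * N := by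
        have : (1:ℝ) ≤ N := by exact_mod_cast hN
        linarith
      linarith
    have hstep : (eps/4) * N * L ≤ 3 * t * Real.logb 2 ((M:ℝ)/t) := by
      linarith [hlog, hchooselog, hN1]
    calc c * N * L ≤ (eps/12) * N * L := by
          apply mul_le_mul_of_nonneg_right _ hL0
          exact mul_le_mul_of_nonneg_right hc12 (le_of_lt hN0)
      _ ≤ (t:ℝ) * Real.logb 2 ((M:ℝ)/t) := by linarith [hstep]
  · -- small regime
    have hKL : Br^(1-lam) ≤ K0 * L := by
      rcases lt_or_ge (eps*L) 8 with h8 | h8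
      · have hLlt : L ≤ 8/eps := by
          rw [le_div_iff₀ heps]
          nlinarith
        calc Br^(1-lam) ≤ Br := hBrpow_le_Br
          _ = 2^L := by
              rw [hLdef]
              exact (Real.rpow_logb (by norm_num) (by norm_num) hBr0).symm
          _ ≤ 2^((8:ℝ)/eps) := Real.rpow_le_rpow_of_exponent_le one_le_two hLlt
          _ ≤ 2^((8:ℝ)/eps) * L := le_mul_of_one_le_right (by positivity) hL1
          _ ≤ K0 * L := by
              apply mul_le_mul_of_nonneg_right _ hL0
              rw [hK0def]; linarith
      · have hlt : Br^(1-eps) < 2*eps*L := by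
          by_contra hcon
          push_neg at hcon
          exact hreg ⟨h8, hcon⟩
        calc Br^(1-lam) ≤ Br^(1-eps) := hBlamle
          _ ≤ 2*eps*L := le_of_lt hlt
          _ ≤ 2*L := by nlinarith
          _ ≤ K0*L := mul_le_mul_of_nonneg_right hK02 hL0
    have hcrudeR : (N:ℝ)*L ≤ Real.logb 2 (M.choose t) + (t:ℝ)*w := by
      have hcastle : ((B'+1 : ℕ):ℝ)^(N:ℕ) ≤ (M.choose t : ℝ) * 2^(t*w) := by
        exact_mod_cast hcrude
      have h1 : Real.logb 2 (((B'+1 : ℕ):ℝ)^(N:ℕ)) = (N:ℝ)*L := by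
        rw [Real.logb_pow, ← hBrdef, ← hLdef]
      have h2 : Real.logb 2 ((M.choose t : ℝ) * 2^(t*w)) =
          Real.logb 2 (M.choose t) + ((t*w : ℕ):ℝ) := by
        rw [Real.logb_mul (ne_of_gt hch0) (by positivity)]
        congr 1
        rw [Real.logb_pow, Real.logb_self_eq_one (by norm_num : (1:ℝ) < 2)]
        push_cast
        ring
      have h3 : Real.logb 2 (((B'+1 : ℕ):ℝ)^(N:ℕ)) ≤
          Real.logb 2 ((M.choose t : ℝ) * 2^(t*w)) :=
        Real.logb_le_logb_of_le (by norm_num : (1:ℝ) < 2) (by positivity) hcastle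
      rw [h1, h2] at h3
      push_cast at h3
      linarith
    have hfin : (N:ℝ)*L ≤ 3 * t * Real.logb 2 ((M:ℝ)/t) + (t:ℝ)*w := by
      linarith
    by_cases htw2 : (N:ℝ)*L/2 ≤ (t:ℝ)*w
    · left
      apply hleft (1/(2*K0)) hc2K0
      calc (1/(2*K0)) * N * Br^(1-lam) ≤ (1/(2*K0)) * N * (K0 * L) := by
            apply mul_le_mul_of_nonneg_left hKL (by positivity)
        _ = (N:ℝ)*L/2 * (K0/K0) := by ring
        _ = (N:ℝ)*L/2 := by rw [div_self (ne_of_gt hK0pos), mul_one]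
        _ ≤ (t:ℝ)*w := htw2
    · right
      push_neg at htw2
      have h6 : (N:ℝ)*L/6 ≤ (t:ℝ) * Real.logb 2 ((M:ℝ)/t) := by linarith
      calc c * N * L ≤ (1/6) * N * L := by
            apply mul_le_mul_of_nonneg_right _ hL0
            exact mul_le_mul_of_nonneg_right hc16 (le_of_lt hN0)
        _ = (N:ℝ)*L/6 := by ring
        _ ≤ (t:ℝ) * Real.logb 2 ((M:ℝ)/t) := h6
end

section
/- Let T ∈ {0,1}^n and let T' ∈ {0,1}^{2n} be the image of T under the morphism sending the character 0 to the two-character string 10 and the character 1 to the two-character string 01 (i.e., T' is the concatenation of these two-character blocks over the positions of T). Then: (a) for every i ∈ [0..n), select_{T',1}(i) = 2i + T[i]; and (b) if T is produced by an unweighted SLG of size g, then T' is produced by an unweighted SLG of size at most g + 4. -/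
open scoped BigOperators

/-- The image of a binary string under the morphism `0 ↦ 10`, `1 ↦ 01`. -/
def morph01 (T : List (Fin 2)) : List (Fin 2) :=
  (T.map (fun c => if c = 0 then [(1 : Fin 2), 0] else [(0 : Fin 2), 1])).flatten

/- ========== Auxiliary material ========== -/

lemma morph01_cons (c : Fin 2) (t : List (Fin 2)) :
    morph01 (c :: t) = (if c = 0 then [(1:Fin 2),0] else [(0:Fin 2),1]) ++ morph01 t := by
  simp [morph01]

lemma morph01_append (a b : List (Fin 2)) :
    morph01 (a ++ b) = morph01 a ++ morph01 b := by
  simp [morph01]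

lemma morph01_flatten (L : List (List (Fin 2))) :
    morph01 L.flatten = (L.map morph01).flatten := by
  induction L with
  | nil => rfl
  | cons a l ih => simp [morph01_append, ih]

lemma partA : ∀ (T : List (Fin 2)) (i : ℕ), i < T.length →
    (morph01 T).getD (2 * i + ((T.getD i 0 : Fin 2) : ℕ)) 0 = 1 ∧
    ((morph01 T).take (2 * i + ((T.getD i 0 : Fin 2) : ℕ))).count 1 = i := by
  intro T
  induction T with
  | nil => intro i hi; simp at hi
  | cons c t ih =>
    intro i hi
    cases i with
    | zero =>
      fin_cases c <;> simp [morph01_cons, List.getD, List.count_cons]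
    | succ j =>
      have hj : j < t.length := by simpa using hi
      obtain ⟨h1, h2⟩ := ih j hj
      have hidx : 2 * (j+1) + ((t.getD j 0 : Fin 2) : ℕ)
          = (2 * j + ((t.getD j 0 : Fin 2):ℕ)) + 1 + 1 := by ring
      have hc : c = 0 ∨ c = 1 := by clear hi; revert c; decide
      constructor
      · rw [List.getD_cons_succ, hidx, morph01_cons]
        rcases hc with rfl | rfl
        · rw [if_pos rfl]
          simpa [List.cons_append, List.nil_append, List.getD_cons_succ] using h1
        · rw [if_neg (by decide)]
          simpa [List.cons_append, List.nil_append, List.getD_cons_succ] using h1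
      · rw [List.getD_cons_succ, hidx, morph01_cons]
        rcases hc with rfl | rfl
        · rw [if_pos rfl]
          simpa [List.cons_append, List.nil_append, List.take_succ_cons,
            List.count_cons] using h2
        · rw [if_neg (by decide)]
          simpa [List.cons_append, List.nil_append, List.take_succ_cons,
            List.count_cons] using h2

namespace WSLG

lemma expandFuel_inr (G : WSLG nv α) (m : ℕ) (a : α) :
    G.expandFuel m (Sum.inr a) = [a] := by cases m <;> rfl

lemma expandFuel_stable (G : WSLG nv α) :
    ∀ (r : ℕ) (A : Fin nv), G.rank A < r → ∀ m k, G.rank A < m → G.rank A < k →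
      G.expandFuel m (Sum.inl A) = G.expandFuel k (Sum.inl A) := by
  intro r
  induction r with
  | zero => intro A hA; omega
  | succ r ih =>
    intro A hA m k hm hk
    obtain ⟨m', rfl⟩ : ∃ m', m = m' + 1 := ⟨m - 1, by omega⟩
    obtain ⟨k', rfl⟩ : ∃ k', k = k' + 1 := ⟨k - 1, by omega⟩
    simp only [expandFuel]
    congr 1
    apply List.map_congr_left
    intro s hs
    cases s with
    | inr a => simp [expandFuel_inr]
    | inl B =>
      have hB := G.rank_lt A B hs
      exact ih B (by omega) m' k' (by omega) (by omega)

lemma exp_inl (G : WSLG nv α) (A : Fin nv) :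
    G.exp (Sum.inl A) = G.expSeq (G.rhs A) := by
  show G.expandFuel (G.rank A + 1) (Sum.inl A) = _
  simp only [expandFuel, expSeq]
  congr 1
  apply List.map_congr_left
  intro s hs
  cases s with
  | inr a => simp [expandFuel_inr, exp]
  | inl B =>
    have hB := G.rank_lt A B hs
    exact G.expandFuel_stable (G.rank B + 1) B (by omega) (G.rank A) (G.rank B + 1) hB (by omega)

end WSLG

/-- Symbol mapping for the morphism grammar. -/
def msym {nv : ℕ} : GSym nv (Fin 2) → GSym (nv + 2) (Fin 2)
  | Sum.inl A => Sum.inl (Fin.castAdd 2 A)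
  | Sum.inr a => if a = 0 then Sum.inl ⟨nv, by omega⟩ else Sum.inl ⟨nv + 1, by omega⟩

/-- The grammar producing `morph01` of the string of `G`. -/
def mgram {nv : ℕ} (G : WSLG nv (Fin 2)) : WSLG (nv + 2) (Fin 2) where
  rhs A := if h : (A : ℕ) < nv then (G.rhs ⟨A, h⟩).map msym
           else if (A : ℕ) = nv then [Sum.inr 1, Sum.inr 0] else [Sum.inr 0, Sum.inr 1]
  start := msym G.start
  wt _ := 1
  wt_pos _ := le_refl 1
  rank A := if h : (A : ℕ) < nv then G.rank ⟨A, h⟩ + 1 else 0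
  rank_lt := by
    intro A B hB
    by_cases hA : (A : ℕ) < nv
    · simp only [dif_pos hA] at hB ⊢
      obtain ⟨s, hs, hmap⟩ := List.mem_map.mp hB
      cases s with
      | inl B' =>
        have hBB : B = Fin.castAdd 2 B' := by simpa [msym] using hmap.symm
        subst hBB
        have hlt := G.rank_lt ⟨A, hA⟩ B' hs
        have hc : ((Fin.castAdd 2 B' : Fin (nv+2)) : ℕ) < nv := B'.isLt
        rw [dif_pos hc]
        simpa using hlt
      | inr a =>
        have hge : ¬ ((B : ℕ) < nv) := by
          by_cases ha : a = 0
          · have h2 : (⟨nv, by omega⟩ : Fin (nv+2)) = B :=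
              Sum.inl.inj (by rw [← hmap]; simp [msym, ha])
            have h3 : nv = (B : ℕ) := congrArg Fin.val h2
            omega
          · have h2 : (⟨nv + 1, by omega⟩ : Fin (nv+2)) = B :=
              Sum.inl.inj (by rw [← hmap]; simp [msym, ha])
            have h3 : nv + 1 = (B : ℕ) := congrArg Fin.val h2
            omega
        rw [dif_neg hge]
        omega
    · exfalso
      simp only [dif_neg hA] at hB
      by_cases h2 : (A : ℕ) = nv <;> simp [h2] at hB

lemma mgram_rhs_lt {nv : ℕ} (G : WSLG nv (Fin 2)) (A : Fin nv) :
    (mgram G).rhs (Fin.castAdd 2 A) = (G.rhs A).map msym := by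
  have hc : ((Fin.castAdd 2 A : Fin (nv+2)) : ℕ) < nv := A.isLt
  simp [mgram, dif_pos hc]

lemma mgram_exp_term {nv : ℕ} (G : WSLG nv (Fin 2)) (a : Fin 2) :
    (mgram G).exp (msym (Sum.inr a)) = morph01 [a] := by
  have h0 : ¬ ((nv : ℕ) < nv) := lt_irrefl nv
  have h1 : ¬ ((nv + 1 : ℕ) < nv) := by omega
  fin_cases a
  · show (mgram G).exp (Sum.inl ⟨nv, by omega⟩) = _
    rw [WSLG.exp_inl]
    show (mgram G).expSeq ((mgram G).rhs ⟨nv, by omega⟩) = _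
    have : (mgram G).rhs ⟨nv, by omega⟩ = [Sum.inr 1, Sum.inr 0] := by
      simp [mgram]
    rw [this]
    simp [WSLG.expSeq, WSLG.exp, morph01]
  · show (mgram G).exp (Sum.inl ⟨nv + 1, by omega⟩) = _
    rw [WSLG.exp_inl]
    have : (mgram G).rhs ⟨nv + 1, by omega⟩ = [Sum.inr 0, Sum.inr 1] := by
      simp [mgram]
    rw [this]
    simp [WSLG.expSeq, WSLG.exp, morph01]

lemma mgram_exp_aux {nv : ℕ} (G : WSLG nv (Fin 2)) :
    ∀ (r : ℕ) (s : GSym nv (Fin 2)), (∀ A, s = Sum.inl A → G.rank A < r) →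
      (mgram G).exp (msym s) = morph01 (G.exp s) := by
  intro r
  induction r with
  | zero =>
    intro s hs
    cases s with
    | inl A => exact absurd (hs A rfl) (by omega)
    | inr a => exact (mgram_exp_term G a).trans (by simp [WSLG.exp])
  | succ r ih =>
    intro s hs
    cases s with
    | inr a => exact (mgram_exp_term G a).trans (by simp [WSLG.exp])
    | inl A =>
      show (mgram G).exp (Sum.inl (Fin.castAdd 2 A)) = _
      rw [WSLG.exp_inl, WSLG.exp_inl, mgram_rhs_lt]
      simp only [WSLG.expSeq, List.map_map]
      rw [morph01_flatten, List.map_map]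
      congr 1
      apply List.map_congr_left
      intro s' hs'
      show (mgram G).exp (msym s') = morph01 (G.exp s')
      apply ih
      intro B hB
      subst hB
      have := G.rank_lt A B hs'
      have := hs A rfl
      omega

lemma mgram_exp_start {nv : ℕ} (G : WSLG nv (Fin 2)) :
    (mgram G).exp (mgram G).start = morph01 (G.exp G.start) := by
  show (mgram G).exp (msym G.start) = _
  cases hst : G.start with
  | inl A =>
    exact mgram_exp_aux G (G.rank A + 1) (Sum.inl A)
      (by intro B hB; cases Sum.inl.inj hB; omega)
  | inr a =>
    exact mgram_exp_aux G 0 (Sum.inr a)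
      (by intro B hB; exact absurd hB (Sum.inr_ne_inl))

lemma mgram_size {nv : ℕ} (G : WSLG nv (Fin 2)) :
    (mgram G).size = G.size + 4 := by
  unfold WSLG.size
  rw [Fin.sum_univ_castSucc, Fin.sum_univ_castSucc]
  have h1 : ∀ A : Fin nv,
      ((mgram G).rhs ((A.castSucc).castSucc)).length = (G.rhs A).length := by
    intro A
    have hc : ((A.castSucc.castSucc : Fin (nv+2)) : ℕ) < nv := A.isLt
    simp [mgram, dif_pos hc]
  have h2 : ((mgram G).rhs ((Fin.last nv).castSucc)).length = 2 := by
    have hc : ¬ (((Fin.last nv).castSucc : Fin (nv+2)) : ℕ) < nv := by simp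
    simp [mgram, dif_neg hc]
  have h3 : ((mgram G).rhs (Fin.last (nv+1))).length = 2 := by
    have hc : ¬ ((Fin.last (nv+1) : Fin (nv+2)) : ℕ) < nv := by simp
    have hc2 : ¬ ((Fin.last (nv+1) : Fin (nv+2)) : ℕ) = nv := by simp
    simp [mgram, dif_neg hc, hc2]
  rw [h2, h3]
  have : ∑ A : Fin nv, ((mgram G).rhs ((A.castSucc).castSucc)).length
      = ∑ A : Fin nv, (G.rhs A).length := Finset.sum_congr rfl (fun A _ => h1 A)
  omega

/-- For `T ∈ {0,1}^n` and its image `T'` under the morphism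
`0 ↦ 10`, `1 ↦ 01`: (a) for every `i ∈ [0..n)`,
`select_{T',1}(i) = 2i + T[i]` (expressed by its defining property:
`T'[2i + T[i]] = 1` and `T'[0..2i+T[i])` contains exactly `i` ones);
(b) if `T` is produced by an unweighted SLG of size `g`, then `T'` is produced
by an unweighted SLG of size at most `g + 4`. -/
theorem morph_select_and_grammar (n : ℕ) (T : List (Fin 2)) (hT : T.length = n) :
    (∀ i < n,
        (morph01 T).getD (2 * i + ((T.getD i 0 : Fin 2) : ℕ)) 0 = 1 ∧
        ((morph01 T).take (2 * i + ((T.getD i 0 : Fin 2) : ℕ))).count 1 = i) ∧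
    (∀ (g nv : ℕ) (G : WSLG nv (Fin 2)),
        G.Unweighted → G.size = g → G.exp G.start = T →
        ∃ (nv' : ℕ) (H : WSLG nv' (Fin 2)),
          H.Unweighted ∧ H.exp H.start = morph01 T ∧ H.size ≤ g + 4) := by
  constructor
  · intro i hi
    exact partA T i (by omega)
  · intro g nv G hU hsz hexp
    refine ⟨nv + 2, mgram G, fun a => rfl, ?_, ?_⟩
    · rw [mgram_exp_start, hexp]
    · rw [mgram_size, hsz]
end
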